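/- For a 4-level thermal state with energies 0 = E_0 ≤ E_1 ≤ E_2 ≤ E_3 and probabilities p_i = e^{-βE_i}/Z, the inequality p_0/(p_0²+p_1²+p_2²+p_3²) ≥ p_2/(2(p_0p_2 + p_1p_3)) holds whenever the gaps are decreasing (E_1 ≥ E_2 - E_1 ≥ E_3 - E_2). -/

import Mathlib

/-! Both sides of the inequality are homogeneous of degree `-1` in the Boltzmann weights, so the
partition function cancels and, writing `a, b, c` for the weights `e^{-βE₁}, e^{-βE₂}, e^{-βE₃}`
relative to `e^{-βE₀} = 1`, the claim becomes `b (1 + a² + b² + c²) ≤ 2 (b + a c)`.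
The gap condition `E₃ - E₂ ≤ E₂ - E₁` makes the weights log-concave, `b² ≤ a c`, so it suffices
that `a² + b² + c² ≤ 1 + 2 b`, which holds because `0 ≤ c ≤ b ≤ a ≤ 1`. -/

open Real

/-- Thermal probability for a 4-level system with energies `0, E₁, E₂, E₃` at inverse
temperature `b`: `p4 E₁ E₂ E₃ b e = e^{-b e} / Z(b)`. -/
noncomputable def p4 (E₁ E₂ E₃ b e : ℝ) : ℝ :=
  Real.exp (-b * e) /
    (Real.exp (-b * 0) + Real.exp (-b * E₁) + Real.exp (-b * E₂) + Real.exp (-b * E₃))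

lemma mul_one_add_sq_add_sq_add_sq_le {a b c : ℝ} (hc : 0 ≤ c) (hcb : c ≤ b) (hba : b ≤ a)
    (ha : a ≤ 1) (hbac : b ^ 2 ≤ a * c) :
    b * (1 + a ^ 2 + b ^ 2 + c ^ 2) ≤ 2 * (b + a * c) := by
  have hb : 0 ≤ b := hc.trans hcb
  have hb1 : b ≤ 1 := hba.trans ha
  calc b * (1 + a ^ 2 + b ^ 2 + c ^ 2) ≤ b * (1 + 1 + b + b) := by
        gcongr <;> nlinarith
    _ = 2 * (b + b ^ 2) := by ring
    _ ≤ 2 * (b + a * c) := by gcongr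

lemma div_scale_le_div_scale_iff {x₀ x₁ x₂ x₃ Z : ℝ} (hZ : 0 < Z) :
    (x₂ / Z) / (2 * ((x₀ / Z) * (x₂ / Z) + (x₁ / Z) * (x₃ / Z))) ≤
        (x₀ / Z) / ((x₀ / Z) ^ 2 + (x₁ / Z) ^ 2 + (x₂ / Z) ^ 2 + (x₃ / Z) ^ 2) ↔
      x₂ / (2 * (x₀ * x₂ + x₁ * x₃)) ≤ x₀ / (x₀ ^ 2 + x₁ ^ 2 + x₂ ^ 2 + x₃ ^ 2) := by
  have hscale : ∀ x D : ℝ, (x / Z) / (D / Z ^ 2) = Z * (x / D) := by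
    intro x D
    field_simp
  have hl : 2 * ((x₀ / Z) * (x₂ / Z) + (x₁ / Z) * (x₃ / Z)) = 2 * (x₀ * x₂ + x₁ * x₃) / Z ^ 2 := by
    field_simp
  have hr : (x₀ / Z) ^ 2 + (x₁ / Z) ^ 2 + (x₂ / Z) ^ 2 + (x₃ / Z) ^ 2 =
      (x₀ ^ 2 + x₁ ^ 2 + x₂ ^ 2 + x₃ ^ 2) / Z ^ 2 := by
    field_simp
  rw [hl, hr, hscale, hscale, mul_le_mul_iff_right₀ hZ]

lemma exp_neg_mul_le_exp_neg_mul {β E E' : ℝ} (hβ : 0 ≤ β) (h : E ≤ E') :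
    exp (-β * E') ≤ exp (-β * E) :=
  exp_le_exp.2 (by nlinarith)

theorem stmt12_general (E₁ E₂ E₃ β : ℝ) (h1 : 0 ≤ E₁) (h2 : E₁ ≤ E₂) (h3 : E₂ ≤ E₃)
    (hgap2 : E₃ - E₂ ≤ E₂ - E₁) (hβ : 0 ≤ β) :
    p4 E₁ E₂ E₃ β E₂ /
        (2 * (p4 E₁ E₂ E₃ β 0 * p4 E₁ E₂ E₃ β E₂ + p4 E₁ E₂ E₃ β E₁ * p4 E₁ E₂ E₃ β E₃))
      ≤ p4 E₁ E₂ E₃ β 0 /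
        (p4 E₁ E₂ E₃ β 0 ^ 2 + p4 E₁ E₂ E₃ β E₁ ^ 2 +
          p4 E₁ E₂ E₃ β E₂ ^ 2 + p4 E₁ E₂ E₃ β E₃ ^ 2) := by
  have hlogconcave : exp (-β * E₂) ^ 2 ≤ exp (-β * E₁) * exp (-β * E₃) := by
    rw [sq, ← exp_add, ← exp_add]
    exact exp_le_exp.2 (by nlinarith)
  have hkey := mul_one_add_sq_add_sq_add_sq_le (exp_pos _).le
    (exp_neg_mul_le_exp_neg_mul hβ h3) (exp_neg_mul_le_exp_neg_mul hβ h2)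
    (by simpa using exp_neg_mul_le_exp_neg_mul hβ h1) hlogconcave
  unfold p4
  rw [div_scale_le_div_scale_iff (by positivity), mul_zero, exp_zero,
    div_le_div_iff₀ (by positivity) (by positivity)]
  linarith

/-- For a 4-level thermal state with energies `0 = E₀ ≤ E₁ ≤ E₂ ≤ E₃` with decreasing
gaps `E₁ ≥ E₂ - E₁ ≥ E₃ - E₂`, one has
`p₀/(p₀² + p₁² + p₂² + p₃²) ≥ p₂/(2(p₀p₂ + p₁p₃))`. -/
theorem stmt12 (E₁ E₂ E₃ β : ℝ) (h1 : 0 ≤ E₁) (h2 : E₁ ≤ E₂) (h3 : E₂ ≤ E₃)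
    (hgap1 : E₂ - E₁ ≤ E₁) (hgap2 : E₃ - E₂ ≤ E₂ - E₁) (hβ : 0 ≤ β) :
    p4 E₁ E₂ E₃ β E₂ /
        (2 * (p4 E₁ E₂ E₃ β 0 * p4 E₁ E₂ E₃ β E₂ + p4 E₁ E₂ E₃ β E₁ * p4 E₁ E₂ E₃ β E₃))
      ≤ p4 E₁ E₂ E₃ β 0 /
        (p4 E₁ E₂ E₃ β 0 ^ 2 + p4 E₁ E₂ E₃ β E₁ ^ 2 +
          p4 E₁ E₂ E₃ β E₂ ^ 2 + p4 E₁ E₂ E₃ β E₃ ^ 2) :=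
  stmt12_general E₁ E₂ E₃ β h1 h2 h3 hgap2 hβ
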